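/- Regard G as a subgroup of Ind ⋊ G₀ via the embedding ρ_{Φ₀}. Then Res_G Ind_{⟨1⟩×G₀}^{Ind⋊G₀}(χ_{⟨1⟩×G₀/{0}×G₀}) = Σ_{Φ∈Λ} Ind_{H̃₀(Φ)}^G(χ_{H̃₀(Φ)/H̃(Φ)}) as characters of G, where Λ is a system of representatives for the conjugacy classes of the CM-types of K. -/

import Mathlib

/- Common combinatorial skeleton for the Galois-theoretic setting of the paper:
`G = Gal(K^c/ℚ)`, `H = Gal(K^c/K)`, `H₀ = Gal(K^c/K₀)`, `ι` the complex conjugation.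
Embeddings `K ↪ ℂ` correspond to left cosets `G ⧸ H`, embeddings `K₀ ↪ ℂ` to `G ⧸ H₀`. -/

open Pointwise
open scoped Classical

variable {G : Type} [Group G]

/-- A CM-type of `K`: a set `Φ` of embeddings `K ↪ ℂ` (i.e. of cosets in `G ⧸ H`) such that
`Φ` and `ιΦ` are disjoint and every embedding lies in `Φ ∪ ιΦ`. -/
def IsCMType (H : Subgroup G) (ι : G) (Φ : Set (G ⧸ H)) : Prop :=
  (∀ φ ∈ Φ, ι • φ ∉ Φ) ∧ ∀ φ : G ⧸ H, φ ∈ Φ ∨ ι • φ ∈ Φ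

/-- `S_Φ = ⋃_{φ ∈ Φ} φH ⊆ G`. -/
def SPhi (H : Subgroup G) (Φ : Set (G ⧸ H)) : Set G := {g : G | (g : G ⧸ H) ∈ Φ}

/-- `H̃(Φ) = {σ ∈ G : σ S_Φ = S_Φ}`. -/
def Htilde (H : Subgroup G) (Φ : Set (G ⧸ H)) : Subgroup G := MulAction.stabilizer G (SPhi H Φ)

/-- The natural projection `G ⧸ H → G ⧸ H₀` (restriction of embeddings of `K` to `K₀`). -/
def proj (H H₀ : Subgroup G) (h : H ≤ H₀) : G ⧸ H → G ⧸ H₀ :=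
  Quotient.map' id fun a b hab => by
    rw [QuotientGroup.leftRel_apply] at *
    exact h hab

open Classical in
/-- The 1-cocycle `r_Φ : G → Ind`, `r_Φ(τ)(φᵢH₀) = 0` iff `τ⁻¹φᵢ ∈ Φ`, where `φᵢ` is the
unique member of `Φ` lying over the coset `φᵢH₀`. -/
noncomputable def rPhi (H H₀ : Subgroup G) (h : H ≤ H₀) (Φ : Set (G ⧸ H)) (τ : G) :
    (G ⧸ H₀) → ZMod 2 :=
  fun x => if ∃ φ ∈ Φ, proj H H₀ h φ = x ∧ τ⁻¹ • φ ∈ Φ then 0 else 1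

/-- The action of `G` on `Ind = Map(G/H₀, ℤ/2ℤ)`, `(σ·f)(τH₀) = f(σ⁻¹τH₀)`. -/
def indAct (H₀ : Subgroup G) (σ : G) (f : (G ⧸ H₀) → ZMod 2) : (G ⧸ H₀) → ZMod 2 :=
  fun x => f (σ⁻¹ • x)

/-- For `f ∈ Ind`, the CM-type `Φ_f = {ι^{f(φ₁H₀)}φ₁, …, ι^{f(φ_NH₀)}φ_N}` attached to a fixed
CM-type `Φ₀`. -/
noncomputable def PhiF (H H₀ : Subgroup G) (h : H ≤ H₀) (ι : G) (Φ₀ : Set (G ⧸ H))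
    (f : (G ⧸ H₀) → ZMod 2) : Set (G ⧸ H) :=
  (fun φ => ι ^ (f (proj H H₀ h φ)).val • φ) '' Φ₀

/-- The `*`-action of `G` on `Ind`: `τ * f := r_{Φ₀}(τ) + τ·f`. -/
noncomputable def starAct (H H₀ : Subgroup G) (h : H ≤ H₀) (Φ₀ : Set (G ⧸ H)) (τ : G)
    (f : (G ⧸ H₀) → ZMod 2) : (G ⧸ H₀) → ZMod 2 :=
  rPhi H H₀ h Φ₀ τ + indAct H₀ τ f

/-- The automorphism of `Ind = Map(G/H₀, ℤ/2ℤ)` (written multiplicatively) induced by `σ ∈ G`,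
`(σ·f)(τH₀) = f(σ⁻¹τH₀)`. -/
def permAut (H₀ : Subgroup G) (σ : G) :
    ((G ⧸ H₀) → Multiplicative (ZMod 2)) ≃* ((G ⧸ H₀) → Multiplicative (ZMod 2)) where
  toFun f := fun x => f (σ⁻¹ • x)
  invFun f := fun x => f (σ • x)
  left_inv f := by funext x; simp
  right_inv f := by funext x; simp
  map_mul' f g := rfl

/-- The action of `G` on `Ind` as a homomorphism `G →* Aut(Ind)`. -/
def permHom (H₀ : Subgroup G) : G →* MulAut ((G ⧸ H₀) → Multiplicative (ZMod 2)) where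
  toFun := permAut H₀
  map_one' := by
    ext f x
    simp [permAut]
  map_mul' σ τ := by
    ext f x
    simp [permAut, mul_smul]

/-- Since `C = ⋂_τ τH₀τ⁻¹` acts trivially on `G/H₀`, the action of `G` on `Ind` descends to
`G₀ = G/C`. -/
noncomputable def permHom₀ (H₀ : Subgroup G) :
    (G ⧸ H₀.normalCore) →* MulAut ((G ⧸ H₀) → Multiplicative (ZMod 2)) :=
  QuotientGroup.lift H₀.normalCore (permHom H₀) (by
    intro c hc
    ext f x
    induction x using QuotientGroup.induction_on with
    | H g =>
      show f (c⁻¹ • (g : G ⧸ H₀)) = f g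
      congr 1
      show ((c⁻¹ * g : G) : G ⧸ H₀) = g
      rw [QuotientGroup.eq, mul_inv_rev, inv_inv]
      simpa using hc g⁻¹)

/-- The semidirect product `Ind ⋊ G₀` with multiplication `(f,σ)(f′,σ′) = (f + σ·f′, σσ′)`. -/
noncomputable abbrev IndSemidirect (H₀ : Subgroup G) : Type :=
  SemidirectProduct ((G ⧸ H₀) → Multiplicative (ZMod 2)) (G ⧸ H₀.normalCore) (permHom₀ H₀)

/-- The constant function `1 ∈ Ind`. -/
def oneInd (H₀ : Subgroup G) : (G ⧸ H₀) → Multiplicative (ZMod 2) :=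
  fun _ => Multiplicative.ofAdd 1

lemma permHom₀_const (H₀ : Subgroup G) (σ : G ⧸ H₀.normalCore) :
    permHom₀ H₀ σ (oneInd H₀) = oneInd H₀ := by
  induction σ using QuotientGroup.induction_on with
  | H g => rfl

lemma oneInd_mul_oneInd (H₀ : Subgroup G) : oneInd H₀ * oneInd H₀ = 1 := by
  funext x
  simp only [Pi.mul_apply, Pi.one_apply, oneInd]
  decide

lemma oneInd_inv (H₀ : Subgroup G) : (oneInd H₀)⁻¹ = oneInd H₀ := by
  funext x
  simp only [Pi.inv_apply, oneInd]
  decide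

/-- The subgroup `⟨1⟩ × G₀` of `Ind ⋊ G₀`, where `⟨1⟩ = {0, 1}` is generated by the constant
function `1`. -/
noncomputable def oneTimesG₀ (H₀ : Subgroup G) : Subgroup (IndSemidirect H₀) where
  carrier := {w | w.left = 1 ∨ w.left = oneInd H₀}
  one_mem' := Or.inl rfl
  mul_mem' := by
    rintro a b (ha | ha) (hb | hb) <;>
      simp only [Set.mem_setOf_eq, SemidirectProduct.mul_left, ha, hb, map_one, mul_one,
        one_mul, permHom₀_const, oneInd_mul_oneInd] <;> tauto
  inv_mem' := by
    rintro a (ha | ha) <;>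
      simp only [Set.mem_setOf_eq, SemidirectProduct.inv_left, ha, inv_one, map_one,
        oneInd_inv, permHom₀_const] <;> tauto


/-- The embedding `ρ_{Φ₀} : G → Ind ⋊ G₀`, `τ ↦ (r_{Φ₀}(τ), ρ(τ))`. -/
noncomputable def rhoEmb (H H₀ : Subgroup G) (hle : H ≤ H₀) (Φ₀ : Set (G ⧸ H)) (τ : G) :
    IndSemidirect H₀ :=
  ⟨fun x => Multiplicative.ofAdd (rPhi H H₀ hle Φ₀ τ x), (τ : G ⧸ H₀.normalCore)⟩

/-- Induced character `Ind_U^G(χ)` by the standard formula. -/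
noncomputable def indChar {G' : Type} [Group G'] (U : Subgroup G') (χ : G' → ℂ) (g : G') : ℂ :=
  (Nat.card U : ℂ)⁻¹ * ∑ᶠ x : G', if x⁻¹ * g * x ∈ U then χ (x⁻¹ * g * x) else 0

/-!
Both sides are instances of one computation. Let `Γ` act on a set with an equivariant map `j`,
let `a` be a point such that `j a ≠ a` lies in the orbit of `a`, let `U` be the subgroup of
elements sending `a` to `a` or to `j a`, and let `χ` be the character of `U` with kernel the
stabilizer of `a`.
Counting the conjugates of `γ` that land in `U` orbit-wise gives
`Ind_U^Γ χ (γ) = ½ ∑_{b ∈ Γ a} s(b)`, where `s(b)` is `1` if `γ b = b`, `-1` if `γ b = j b`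
and `0` otherwise.

For `Φ ∈ Λ` this applies to `G` acting on CM-types, with `j = ι` and `U = H̃₀(Φ)`; the orbits of
the members of `Λ` partition the CM-types. For the left side it applies to `Ind ⋊ G₀` acting
on `Ind` by affine maps, with `a = 0` and `j = (· + 1)`; this action is transitive, and
`f ↦ Φ_f` is a bijection from `Ind` onto the CM-types turning the action of `ρ_{Φ₀}(τ)` into
that of `τ` and `f + 1` into `ιΦ_f`. Hence both sides equal `½ ∑_Φ s(Φ)` over all CM-types.
-/

namespace MulAction

open Finset

variable {Γ α : Type*} [Group Γ] [MulAction Γ α] [Fintype Γ] [DecidableEq α]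

variable (Γ) in
def orbitFinset (a : α) : Finset α := (univ : Finset Γ).image (· • a)

lemma mem_orbitFinset {a b : α} : b ∈ orbitFinset Γ a ↔ ∃ x : Γ, x • a = b := by
  simp [orbitFinset]

lemma card_filter_smul_eq_card_stabilizer (a : α) (x₀ : Γ) :
    #{x : Γ | x • a = x₀ • a} = Nat.card (stabilizer Γ a) := by
  rw [Nat.card_eq_fintype_card, ← Fintype.card_subtype]
  refine Fintype.card_congr
    { toFun := fun x => ⟨x₀⁻¹ * x, by rw [mem_stabilizer_iff, mul_smul, x.2, inv_smul_smul]⟩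
      invFun := fun s => ⟨x₀ * s, by rw [mul_smul, s.2.out]⟩
      left_inv := fun x => by simp
      right_inv := fun s => by simp }

lemma sum_smul_eq_card_stabilizer_nsmul_sum_orbitFinset {M : Type*} [AddCommMonoid M]
    (F : α → M) (a : α) :
    ∑ x : Γ, F (x • a) = Nat.card (stabilizer Γ a) • ∑ b ∈ orbitFinset Γ a, F b := by
  rw [orbitFinset, Finset.sum_comp, Finset.smul_sum]
  refine Finset.sum_congr rfl fun b hb => ?_
  obtain ⟨x₀, -, rfl⟩ := Finset.mem_image.1 hb
  rw [card_filter_smul_eq_card_stabilizer]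

lemma sum_sum_orbitFinset_eq_sum_filter [Fintype α] {M : Type*} [AddCommMonoid M]
    {P : α → Prop} [DecidablePred P] (hP : ∀ (x : Γ) a, P a → P (x • a)) (Λ : Finset α)
    (hΛP : ∀ a ∈ Λ, P a) (hΛrep : ∀ b, P b → ∃ a ∈ Λ, ∃ x : Γ, b = x • a)
    (hΛuniq : ∀ a ∈ Λ, ∀ a' ∈ Λ, (∃ x : Γ, a' = x • a) → a = a') (F : α → M) :
    ∑ a ∈ Λ, ∑ b ∈ orbitFinset Γ a, F b = ∑ b ∈ univ.filter P, F b := by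
  have hdisj : (Λ : Set α).PairwiseDisjoint (orbitFinset Γ) := by
    intro a ha a' ha' hne
    refine Finset.disjoint_left.2 fun b hb hb' => hne (hΛuniq a ha a' ha' ?_)
    obtain ⟨x, rfl⟩ := mem_orbitFinset.1 hb
    obtain ⟨x', hx'⟩ := mem_orbitFinset.1 hb'
    exact ⟨x'⁻¹ * x, by rw [mul_smul, ← hx', inv_smul_smul]⟩
  rw [← Finset.sum_biUnion hdisj]
  congr 1
  ext b
  simp only [Finset.mem_biUnion, mem_orbitFinset, Finset.mem_filter, Finset.mem_univ, true_and]
  constructor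
  · rintro ⟨a, ha, x, rfl⟩
    exact hP x a (hΛP a ha)
  · intro hb
    obtain ⟨a, ha, x, rfl⟩ := hΛrep b hb
    exact ⟨a, ha, x, rfl⟩

end MulAction

section InducedCharacter

open Finset MulAction

variable {Γ α : Type}

noncomputable def fixSign (σ j : α → α) (b : α) : ℂ :=
  if σ b = b then 1 else if σ b = j b then -1 else 0

lemma fixSign_comp {β : Type} {σ j : α → α} {σ' j' : β → β} {T : α → β}
    (hT : Function.Injective T) (hσ : ∀ b, T (σ b) = σ' (T b)) (hj : ∀ b, T (j b) = j' (T b))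
    (b : α) : fixSign σ' j' (T b) = fixSign σ j b := by
  simp only [fixSign, ← hσ, ← hj, hT.eq_iff]

variable [Group Γ] [MulAction Γ α] [DecidableEq α] {U : Subgroup Γ} {a : α} {j : α → α}

lemma ite_conj_mem_eq_fixSign (hj : ∀ (x : Γ) b, j (x • b) = x • j b)
    (hU : ∀ σ, σ ∈ U ↔ σ • a = a ∨ σ • a = j a) {χ : Γ → ℂ}
    (hχ : ∀ σ ∈ U, χ σ = if σ • a = a then 1 else -1) (γ x : Γ) :
    (if x⁻¹ * γ * x ∈ U then χ (x⁻¹ * γ * x) else 0) = fixSign (γ • ·) j (x • a) := by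
  have hfix : (x⁻¹ * γ * x) • a = a ↔ γ • x • a = x • a := by
    rw [mul_smul, mul_smul, inv_smul_eq_iff]
  have hflip : (x⁻¹ * γ * x) • a = j a ↔ γ • x • a = j (x • a) := by
    rw [mul_smul, mul_smul, inv_smul_eq_iff, hj]
  unfold fixSign
  split_ifs with hU' h1 h2 h2 <;> simp_all

variable [Fintype Γ]

lemma card_eq_two_mul_card_stabilizer (hU : ∀ σ, σ ∈ U ↔ σ • a = a ∨ σ • a = j a)
    (hja : j a ≠ a) (hjorb : ∃ u : Γ, u • a = j a) :
    Nat.card U = 2 * Nat.card (stabilizer Γ a) := by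
  have horbit : {b ∈ orbitFinset Γ a | b = a ∨ b = j a} = {a, j a} := by
    ext b
    simp only [mem_filter, mem_orbitFinset, mem_insert, mem_singleton]
    refine ⟨And.right, fun hb => ⟨?_, hb⟩⟩
    rcases hb with rfl | rfl
    exacts [⟨1, one_smul Γ b⟩, hjorb]
  calc Nat.card U = ∑ x : Γ, if x • a = a ∨ x • a = j a then 1 else 0 := by
        simp_rw [← hU, sum_boole, Nat.cast_id, Nat.card_eq_fintype_card, Fintype.card_subtype]
    _ = Nat.card (stabilizer Γ a) * #{b ∈ orbitFinset Γ a | b = a ∨ b = j a} := by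
        rw [sum_smul_eq_card_stabilizer_nsmul_sum_orbitFinset
          (fun b => if b = a ∨ b = j a then 1 else 0), sum_boole, smul_eq_mul, Nat.cast_id]
    _ = 2 * Nat.card (stabilizer Γ a) := by
        rw [horbit, card_pair hja.symm, mul_comm]

theorem indChar_eq_half_sum_fixSign (hj : ∀ (x : Γ) b, j (x • b) = x • j b)
    (hU : ∀ σ, σ ∈ U ↔ σ • a = a ∨ σ • a = j a) (hja : j a ≠ a) (hjorb : ∃ u : Γ, u • a = j a)
    {χ : Γ → ℂ} (hχ : ∀ σ ∈ U, χ σ = if σ • a = a then 1 else -1) (γ : Γ) :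
    indChar U χ γ = 2⁻¹ * ∑ b ∈ orbitFinset Γ a, fixSign (γ • ·) j b := by
  have hstab : (Nat.card (stabilizer Γ a) : ℂ) ≠ 0 := Nat.cast_ne_zero.2 Nat.card_pos.ne'
  rw [indChar, finsum_eq_sum_of_fintype]
  simp_rw [ite_conj_mem_eq_fixSign hj hU hχ γ]
  rw [sum_smul_eq_card_stabilizer_nsmul_sum_orbitFinset,
    card_eq_two_mul_card_stabilizer hU hja hjorb, nsmul_eq_mul, Nat.cast_mul, mul_inv,
    Nat.cast_ofNat, mul_assoc, inv_mul_cancel_left₀ hstab]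

end InducedCharacter

namespace ZMod

lemma add_eq_zero_iff_iff (a b : ZMod 2) : a + b = 0 ↔ (a = 0 ↔ b = 0) := by
  revert a b; decide

lemma eq_of_eq_zero_iff {a b : ZMod 2} (h : a = 0 ↔ b = 0) : a = b := by
  revert a b; decide

lemma pow_val_smul {M β : Type*} [Monoid M] [MulAction M β] (m : M) (c : ZMod 2) (b : β) :
    m ^ c.val • b = if c = 0 then b else m • b := by
  obtain rfl | rfl : c = 0 ∨ c = 1 := by revert c; decide
  · simp
  · simp [ZMod.val_one]

end ZMod

section CMType

variable {H H₀ : Subgroup G} {ι : G}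

lemma smul_comm_of_central {β : Type*} [MulAction G β] (hcent : ∀ g : G, g * ι = ι * g)
    (τ : G) (b : β) : τ • ι • b = ι • τ • b := by
  rw [smul_smul, smul_smul, hcent]

lemma iota_smul_iota_smul {β : Type*} [MulAction G β] (hι2 : ι * ι = 1) (b : β) :
    ι • ι • b = b := by
  rw [smul_smul, hι2, one_smul]

lemma iota_mem_of_cosets (hι2 : ι * ι = 1) (hcosets : ∀ g : G, g ∈ H₀ ↔ g ∈ H ∨ ι * g ∈ H) :
    ι ∈ H₀ :=
  (hcosets ι).2 (Or.inr (hι2 ▸ H.one_mem))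

lemma proj_smul (hle : H ≤ H₀) (τ : G) (φ : G ⧸ H) :
    proj H H₀ hle (τ • φ) = τ • proj H H₀ hle φ := by
  induction φ using QuotientGroup.induction_on with
  | H g => rfl

lemma proj_surjective (hle : H ≤ H₀) : Function.Surjective (proj H H₀ hle) := by
  intro x
  induction x using QuotientGroup.induction_on with
  | H g => exact ⟨g, rfl⟩

lemma proj_iota_smul (hle : H ≤ H₀) (hcent : ∀ g : G, g * ι = ι * g) (hιH₀ : ι ∈ H₀)
    (φ : G ⧸ H) : proj H H₀ hle (ι • φ) = proj H H₀ hle φ := by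
  induction φ using QuotientGroup.induction_on with
  | H g =>
    change ((ι * g : G) : G ⧸ H₀) = g
    rw [← hcent, QuotientGroup.mk_mul_of_mem g hιH₀]

lemma eq_or_eq_iota_smul_of_proj_eq (hle : H ≤ H₀) (hι2 : ι * ι = 1)
    (hcent : ∀ g : G, g * ι = ι * g) (hcosets : ∀ g : G, g ∈ H₀ ↔ g ∈ H ∨ ι * g ∈ H)
    {φ ψ : G ⧸ H} (h : proj H H₀ hle φ = proj H H₀ hle ψ) : ψ = φ ∨ ψ = ι • φ := by
  induction φ using QuotientGroup.induction_on with
  | H g =>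
  induction ψ using QuotientGroup.induction_on with
  | H g' =>
  have hιinv : ι⁻¹ = ι := inv_eq_of_mul_eq_one_right hι2
  change ((g : G) : G ⧸ H₀) = g' at h
  change (g' : G ⧸ H) = g ∨ (g' : G ⧸ H) = (ι * g : G)
  rw [QuotientGroup.eq, hcosets] at h
  rwa [eq_comm, QuotientGroup.eq, eq_comm, QuotientGroup.eq, mul_inv_rev, hιinv, hcent,
    mul_assoc]

lemma isCMType_iff {Φ : Set (G ⧸ H)} : IsCMType H ι Φ ↔ ∀ φ, ι • φ ∈ Φ ↔ φ ∉ Φ := by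
  refine ⟨fun hΦ φ => ⟨fun h hφ => hΦ.1 φ hφ h, (hΦ.2 φ).resolve_left⟩, fun hΦ => ?_⟩
  exact ⟨fun φ hφ h => (hΦ φ).1 h hφ, fun φ => or_iff_not_imp_left.2 (hΦ φ).2⟩

lemma IsCMType.smul (hcent : ∀ g : G, g * ι = ι * g) {Φ : Set (G ⧸ H)} (hΦ : IsCMType H ι Φ)
    (τ : G) : IsCMType H ι (τ • Φ) := by
  rw [isCMType_iff] at hΦ ⊢
  intro φ
  rw [Set.mem_smul_set_iff_inv_smul_mem, Set.mem_smul_set_iff_inv_smul_mem,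
    smul_comm_of_central hcent, hΦ]

lemma IsCMType.iota_smul_ne {Φ : Set (G ⧸ H)} (hΦ : IsCMType H ι Φ) : ι • Φ ≠ Φ := by
  intro h
  let φ : G ⧸ H := (1 : G)
  have hfix : ι • φ ∈ Φ ↔ φ ∈ Φ := by
    conv_lhs => rw [← h]
    exact Set.smul_mem_smul_set_iff
  exact iff_not_self (hfix.symm.trans (isCMType_iff.1 hΦ φ))

lemma SPhi_smul (τ : G) (Φ : Set (G ⧸ H)) : SPhi H (τ • Φ) = τ • SPhi H Φ := by
  ext g
  rw [Set.mem_smul_set_iff_inv_smul_mem]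
  exact Set.mem_smul_set_iff_inv_smul_mem

lemma SPhi_injective : Function.Injective (SPhi H) :=
  fun _ _ h => Set.preimage_injective.2 QuotientGroup.mk_surjective h

lemma Htilde_eq_stabilizer (Φ : Set (G ⧸ H)) : Htilde H Φ = MulAction.stabilizer G Φ := by
  ext τ
  rw [Htilde, MulAction.mem_stabilizer_iff, MulAction.mem_stabilizer_iff, ← SPhi_smul,
    SPhi_injective.eq_iff]

end CMType

section PhiF

variable {H H₀ : Subgroup G} {ι : G} (hle : H ≤ H₀) {Φ₀ : Set (G ⧸ H)}

lemma mem_PhiF_iff (hι2 : ι * ι = 1) (hcent : ∀ g : G, g * ι = ι * g) (hιH₀ : ι ∈ H₀)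
    (hΦ₀ : IsCMType H ι Φ₀) {f : (G ⧸ H₀) → ZMod 2} {ψ : G ⧸ H} :
    ψ ∈ PhiF H H₀ hle ι Φ₀ f ↔ (ψ ∈ Φ₀ ↔ f (proj H H₀ hle ψ) = 0) := by
  rw [isCMType_iff] at hΦ₀
  simp only [PhiF, Set.mem_image, ZMod.pow_val_smul]
  constructor
  · rintro ⟨φ, hφ, rfl⟩
    split_ifs with hf
    · simp [hφ, hf]
    · rw [proj_iota_smul hle hcent hιH₀, hΦ₀]
      tauto
  · intro h
    by_cases hψ : ψ ∈ Φ₀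
    · exact ⟨ψ, hψ, by simp [h.1 hψ]⟩
    · refine ⟨ι • ψ, (hΦ₀ ψ).2 hψ, ?_⟩
      rw [proj_iota_smul hle hcent hιH₀, if_neg (mt h.2 hψ), iota_smul_iota_smul hι2]

lemma PhiF_injective (hι2 : ι * ι = 1) (hcent : ∀ g : G, g * ι = ι * g) (hιH₀ : ι ∈ H₀)
    (hΦ₀ : IsCMType H ι Φ₀) : Function.Injective (PhiF H H₀ hle ι Φ₀) := by
  intro f f' h
  funext x
  obtain ⟨ψ, rfl⟩ := proj_surjective hle x
  have hψ := Set.ext_iff.1 h ψ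
  rw [mem_PhiF_iff hle hι2 hcent hιH₀ hΦ₀, mem_PhiF_iff hle hι2 hcent hιH₀ hΦ₀] at hψ
  exact ZMod.eq_of_eq_zero_iff (by tauto)

lemma isCMType_PhiF (hι2 : ι * ι = 1) (hcent : ∀ g : G, g * ι = ι * g) (hιH₀ : ι ∈ H₀)
    (hΦ₀ : IsCMType H ι Φ₀) (f : (G ⧸ H₀) → ZMod 2) : IsCMType H ι (PhiF H H₀ hle ι Φ₀ f) := by
  rw [isCMType_iff]
  intro ψ
  rw [mem_PhiF_iff hle hι2 hcent hιH₀ hΦ₀, mem_PhiF_iff hle hι2 hcent hιH₀ hΦ₀,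
    proj_iota_smul hle hcent hιH₀, isCMType_iff.1 hΦ₀]
  tauto

lemma PhiF_add_one (hι2 : ι * ι = 1) (hcent : ∀ g : G, g * ι = ι * g) (hιH₀ : ι ∈ H₀)
    (hΦ₀ : IsCMType H ι Φ₀) (f : (G ⧸ H₀) → ZMod 2) :
    PhiF H H₀ hle ι Φ₀ (f + 1) = ι • PhiF H H₀ hle ι Φ₀ f := by
  ext ψ
  rw [Set.mem_smul_set_iff_inv_smul_mem, inv_eq_of_mul_eq_one_right hι2,
    mem_PhiF_iff hle hι2 hcent hιH₀ hΦ₀, mem_PhiF_iff hle hι2 hcent hιH₀ hΦ₀,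
    proj_iota_smul hle hcent hιH₀, isCMType_iff.1 hΦ₀, Pi.add_apply, Pi.one_apply,
    ZMod.add_eq_zero_iff_iff]
  tauto

lemma exists_PhiF_eq (hι2 : ι * ι = 1) (hcent : ∀ g : G, g * ι = ι * g)
    (hcosets : ∀ g : G, g ∈ H₀ ↔ g ∈ H ∨ ι * g ∈ H) (hΦ₀ : IsCMType H ι Φ₀)
    {Φ : Set (G ⧸ H)} (hΦ : IsCMType H ι Φ) : ∃ f, PhiF H H₀ hle ι Φ₀ f = Φ := by
  have hagree : ∀ φ ψ, proj H H₀ hle φ = proj H H₀ hle ψ →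
      ((ψ ∈ Φ ↔ ψ ∈ Φ₀) ↔ (φ ∈ Φ ↔ φ ∈ Φ₀)) := by
    intro φ ψ hproj
    rcases eq_or_eq_iota_smul_of_proj_eq hle hι2 hcent hcosets hproj with rfl | rfl
    · rfl
    · rw [isCMType_iff.1 hΦ, isCMType_iff.1 hΦ₀]
      tauto
  let s := Function.surjInv (proj_surjective hle)
  refine ⟨fun x => if (s x ∈ Φ ↔ s x ∈ Φ₀) then 0 else 1, ?_⟩
  ext ψ
  rw [mem_PhiF_iff hle hι2 hcent (iota_mem_of_cosets hι2 hcosets) hΦ₀]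
  have hψ := hagree _ ψ (Function.surjInv_eq (proj_surjective hle) (proj H H₀ hle ψ))
  split_ifs with h
  · tauto
  · simp only [one_ne_zero, iff_false]
    tauto

lemma rPhi_proj_eq_zero_iff (hι2 : ι * ι = 1) (hcent : ∀ g : G, g * ι = ι * g)
    (hcosets : ∀ g : G, g ∈ H₀ ↔ g ∈ H ∨ ι * g ∈ H) (hΦ₀ : IsCMType H ι Φ₀) (τ : G)
    (ψ : G ⧸ H) : rPhi H H₀ hle Φ₀ τ (proj H H₀ hle ψ) = 0 ↔ (ψ ∈ Φ₀ ↔ τ⁻¹ • ψ ∈ Φ₀) := by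
  rw [isCMType_iff] at hΦ₀
  have hrPhi : rPhi H H₀ hle Φ₀ τ (proj H H₀ hle ψ) = 0 ↔
      ∃ φ ∈ Φ₀, proj H H₀ hle φ = proj H H₀ hle ψ ∧ τ⁻¹ • φ ∈ Φ₀ := by
    unfold rPhi
    split_ifs with h <;> simp [h]
  rw [hrPhi]
  constructor
  · rintro ⟨φ, hφ, hproj, hτφ⟩
    rcases eq_or_eq_iota_smul_of_proj_eq hle hι2 hcent hcosets hproj with rfl | rfl
    · tauto
    · rw [smul_comm_of_central hcent, hΦ₀, hΦ₀]
      tauto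
  · intro h
    by_cases hψ : ψ ∈ Φ₀
    · exact ⟨ψ, hψ, rfl, h.1 hψ⟩
    · refine ⟨ι • ψ, (hΦ₀ ψ).2 hψ, proj_iota_smul hle hcent (iota_mem_of_cosets hι2 hcosets) ψ, ?_⟩
      rw [smul_comm_of_central hcent, hΦ₀]
      exact mt h.2 hψ

lemma smul_PhiF (hι2 : ι * ι = 1) (hcent : ∀ g : G, g * ι = ι * g)
    (hcosets : ∀ g : G, g ∈ H₀ ↔ g ∈ H ∨ ι * g ∈ H) (hΦ₀ : IsCMType H ι Φ₀) (τ : G)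
    (f : (G ⧸ H₀) → ZMod 2) :
    τ • PhiF H H₀ hle ι Φ₀ f = PhiF H H₀ hle ι Φ₀ (starAct H H₀ hle Φ₀ τ f) := by
  have hιH₀ := iota_mem_of_cosets hι2 hcosets
  ext ψ
  rw [Set.mem_smul_set_iff_inv_smul_mem, mem_PhiF_iff hle hι2 hcent hιH₀ hΦ₀,
    mem_PhiF_iff hle hι2 hcent hιH₀ hΦ₀, proj_smul]
  change _ ↔ (_ ↔ rPhi H H₀ hle Φ₀ τ (proj H H₀ hle ψ) + f (τ⁻¹ • proj H H₀ hle ψ) = 0)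
  rw [ZMod.add_eq_zero_iff_iff, rPhi_proj_eq_zero_iff hle hι2 hcent hcosets hΦ₀]
  tauto

end PhiF

namespace SemidirectProduct

variable {N K : Type*} [Group N] [Group K] {φ : K →* MulAut N}

instance : MulAction (N ⋊[φ] K) N where
  smul w n := w.left * φ w.right n
  one_smul n := by
    change 1 * φ 1 n = n
    simp
  mul_smul w w' n := by
    change (w * w').left * φ (w * w').right n = w.left * φ w.right (w'.left * φ w'.right n)
    simp [mul_assoc]

lemma smul_def (w : N ⋊[φ] K) (n : N) : w • n = w.left * φ w.right n := rfl

instance [Finite N] [Finite K] : Finite (N ⋊[φ] K) := Finite.of_equiv _ equivProd.symm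

end SemidirectProduct

section CharacterIdentity

open Finset MulAction

variable {H H₀ : Subgroup G} {ι : G} {Φ₀ : Set (G ⧸ H)}

theorem indChar_oneTimesG₀_eq_half_sum_fixSign [Fintype G] (w₀ : IndSemidirect H₀) :
    indChar (oneTimesG₀ H₀) (fun w => if w.left = 1 then 1 else -1) w₀ =
      2⁻¹ * ∑ g, fixSign (w₀ • ·) (· * oneInd H₀) g := by
  have := Fintype.ofFinite (IndSemidirect H₀)
  have horbit : orbitFinset (IndSemidirect H₀) (1 : (G ⧸ H₀) → Multiplicative (ZMod 2)) =
      univ :=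
    eq_univ_of_forall fun g => mem_orbitFinset.2 ⟨⟨g, 1⟩, by simp [SemidirectProduct.smul_def]⟩
  have hone_ne : oneInd H₀ ≠ 1 := fun h =>
    absurd (congrFun h ((1 : G) : G ⧸ H₀)) (show Multiplicative.ofAdd (1 : ZMod 2) ≠ 1 by decide)
  rw [← horbit]
  refine indChar_eq_half_sum_fixSign (fun w g => ?_) (fun w => ?_) (by rwa [one_mul])
    ⟨⟨oneInd H₀, 1⟩, by simp [SemidirectProduct.smul_def]⟩ (fun w _ => ?_) w₀
  · simp only [SemidirectProduct.smul_def, map_mul, permHom₀_const, mul_assoc]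
  · simp only [SemidirectProduct.smul_def, map_one, mul_one, one_mul]
    rfl
  · simp only [SemidirectProduct.smul_def, map_one, mul_one]

theorem sum_fixSign_rhoEmb_eq_sum_isCMType [Fintype G] (hle : H ≤ H₀) (hι2 : ι * ι = 1)
    (hcent : ∀ g : G, g * ι = ι * g) (hcosets : ∀ g : G, g ∈ H₀ ↔ g ∈ H ∨ ι * g ∈ H)
    (hΦ₀ : IsCMType H ι Φ₀) (τ : G) :
    ∑ g, fixSign (rhoEmb H H₀ hle Φ₀ τ • ·) (· * oneInd H₀) g =
      ∑ Ψ ∈ univ.filter (IsCMType H ι), fixSign (τ • ·) (ι • ·) Ψ := by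
  have hιH₀ := iota_mem_of_cosets hι2 hcosets
  let T : ((G ⧸ H₀) → Multiplicative (ZMod 2)) → Set (G ⧸ H) :=
    fun g => PhiF H H₀ hle ι Φ₀ (fun x => (g x).toAdd)
  have hT : Function.Injective T := fun g g' h => funext fun x =>
    Multiplicative.toAdd.injective (congrFun (PhiF_injective hle hι2 hcent hιH₀ hΦ₀ h) x)
  have hT_image : univ.image T = univ.filter (IsCMType H ι) := by
    ext Ψ
    simp only [mem_image, mem_filter, mem_univ, true_and]
    constructor
    · rintro ⟨g, rfl⟩
      exact isCMType_PhiF hle hι2 hcent hιH₀ hΦ₀ _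
    · intro hΨ
      obtain ⟨f, rfl⟩ := exists_PhiF_eq hle hι2 hcent hcosets hΦ₀ hΨ
      exact ⟨fun x => Multiplicative.ofAdd (f x), rfl⟩
  have hT_smul : ∀ g, T (rhoEmb H H₀ hle Φ₀ τ • g) = τ • T g := fun g =>
    (smul_PhiF hle hι2 hcent hcosets hΦ₀ τ _).symm
  have hT_one : ∀ g, T (g * oneInd H₀) = ι • T g := fun g =>
    PhiF_add_one hle hι2 hcent hιH₀ hΦ₀ _
  rw [← hT_image, sum_image hT.injOn]
  exact sum_congr rfl fun g _ => (fixSign_comp hT hT_smul hT_one g).symm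

theorem indChar_Htilde₀_eq_half_sum_fixSign [Fintype G] (hι2 : ι * ι = 1)
    (hcent : ∀ g : G, g * ι = ι * g) {Φ : Set (G ⧸ H)} (hΦ : IsCMType H ι Φ) {U : Subgroup G}
    (hU : ∀ σ, σ ∈ U ↔ σ ∈ Htilde H Φ ∨ ∃ h ∈ Htilde H Φ, σ = ι * h) (τ : G) :
    indChar U (fun u => if u ∈ Htilde H Φ then 1 else -1) τ =
      2⁻¹ * ∑ Ψ ∈ orbitFinset G Φ, fixSign (τ • ·) (ι • ·) Ψ := by
  refine indChar_eq_half_sum_fixSign (fun x Ψ => (smul_comm_of_central hcent x Ψ).symm)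
    (fun σ => ?_) hΦ.iota_smul_ne ⟨ι, rfl⟩ (fun σ _ => ?_) τ
  · simp only [hU, Htilde_eq_stabilizer, mem_stabilizer_iff]
    refine or_congr_right ⟨?_, fun h => ⟨ι * σ, ?_, ?_⟩⟩
    · rintro ⟨h, hh, rfl⟩
      rw [mul_smul, hh]
    · rw [mul_smul, h, iota_smul_iota_smul hι2]
    · rw [← mul_assoc, hι2, one_mul]
  · simp only [Htilde_eq_stabilizer, mem_stabilizer_iff]

end CharacterIdentity

theorem restriction_induced_character_identity_general
    {G : Type} [Group G] [Finite G] (H H₀ : Subgroup G) (hle : H ≤ H₀) (ι : G)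
    (hι2 : ι * ι = 1) (hcent : ∀ g : G, g * ι = ι * g)
    (hcosets : ∀ g : G, g ∈ H₀ ↔ g ∈ H ∨ ι * g ∈ H)
    (Φ₀ : Set (G ⧸ H)) (hΦ₀ : IsCMType H ι Φ₀)
    -- `Λ`: a system of representatives for the conjugacy classes of the CM-types of `K`
    (Λ : Finset (Set (G ⧸ H)))
    (hΛCM : ∀ Φ ∈ Λ, IsCMType H ι Φ)
    (hΛrep : ∀ Φ : Set (G ⧸ H), IsCMType H ι Φ → ∃ Φ' ∈ Λ, ∃ τ : G, Φ = τ • Φ')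
    (hΛuniq : ∀ Φ ∈ Λ, ∀ Φ' ∈ Λ, (∃ τ : G, Φ' = τ • Φ) → Φ = Φ')
    -- `H̃₀(Φ) = H̃(Φ) ∪ ιH̃(Φ)`
    (Ht₀ : Set (G ⧸ H) → Subgroup G)
    (hHt₀ : ∀ (Φ : Set (G ⧸ H)) (σ : G),
      σ ∈ Ht₀ Φ ↔ σ ∈ Htilde H Φ ∨ ∃ h ∈ Htilde H Φ, σ = ι * h) :
    ∀ τ : G,
      indChar (oneTimesG₀ H₀)
          (fun w => if w.left = 1 then 1 else -1) (rhoEmb H H₀ hle Φ₀ τ) =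
      ∑ Φ ∈ Λ, indChar (Ht₀ Φ) (fun u => if u ∈ Htilde H Φ then 1 else -1) τ := by
  intro τ
  have := Fintype.ofFinite G
  rw [Finset.sum_congr rfl fun Φ hΦ =>
      indChar_Htilde₀_eq_half_sum_fixSign hι2 hcent (hΛCM Φ hΦ) (hHt₀ Φ) τ, ← Finset.mul_sum, MulAction.sum_sum_orbitFinset_eq_sum_filter (fun x Φ hΦ => hΦ.smul hcent x)
      Λ hΛCM hΛrep hΛuniq, ← sum_fixSign_rhoEmb_eq_sum_isCMType hle hι2 hcent hcosets hΦ₀ τ]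
  -- the two sides decide `w.left = 1` by different instances
  convert indChar_oneTimesG₀_eq_half_sum_fixSign (rhoEmb H H₀ hle Φ₀ τ) using 4

/-- **Proposition.** Regarding `G` as a subgroup of `Ind ⋊ G₀` via `ρ_{Φ₀}`,
`Res_G Ind_{⟨1⟩×G₀}^{Ind⋊G₀}(χ_{⟨1⟩×G₀/{0}×G₀}) = ∑_{Φ∈Λ} Ind_{H̃₀(Φ)}^G(χ_{H̃₀(Φ)/H̃(Φ)})`
as characters of `G`, where `Λ` is a system of representatives for the conjugacy classes of
the CM-types of `K`. -/
theorem restriction_induced_character_identity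
    {G : Type} [Group G] [Finite G] (H H₀ : Subgroup G) (hle : H ≤ H₀) (ι : G)
    (hι2 : ι * ι = 1) (hι1 : ι ≠ 1) (hcent : ∀ g : G, g * ι = ι * g)
    (hιH : ι ∉ H) (hιH₀ : ι ∈ H₀)
    (hcosets : ∀ g : G, g ∈ H₀ ↔ g ∈ H ∨ ι * g ∈ H)
    (hfaithful : H.normalCore = ⊥)
    (Φ₀ : Set (G ⧸ H)) (hΦ₀ : IsCMType H ι Φ₀)
    -- `Λ`: a system of representatives for the conjugacy classes of the CM-types of `K`
    (Λ : Finset (Set (G ⧸ H)))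
    (hΛCM : ∀ Φ ∈ Λ, IsCMType H ι Φ)
    (hΛrep : ∀ Φ : Set (G ⧸ H), IsCMType H ι Φ → ∃ Φ' ∈ Λ, ∃ τ : G, Φ = τ • Φ')
    (hΛuniq : ∀ Φ ∈ Λ, ∀ Φ' ∈ Λ, (∃ τ : G, Φ' = τ • Φ) → Φ = Φ')
    -- `H̃₀(Φ) = H̃(Φ) ∪ ιH̃(Φ)`
    (Ht₀ : Set (G ⧸ H) → Subgroup G)
    (hHt₀ : ∀ (Φ : Set (G ⧸ H)) (σ : G),
      σ ∈ Ht₀ Φ ↔ σ ∈ Htilde H Φ ∨ ∃ h ∈ Htilde H Φ, σ = ι * h) :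
    ∀ τ : G,
      indChar (oneTimesG₀ H₀)
          (fun w => if w.left = 1 then 1 else -1) (rhoEmb H H₀ hle Φ₀ τ) =
      ∑ Φ ∈ Λ, indChar (Ht₀ Φ) (fun u => if u ∈ Htilde H Φ then 1 else -1) τ :=
  restriction_induced_character_identity_general H H₀ hle ι hι2 hcent hcosets Φ₀ hΦ₀ Λ hΛCM hΛrep
    hΛuniq Ht₀ hHt₀
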